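/- Let a_{XX}, a_{YY}, a_{XI}, a_{ZI}, a_{IX}, a_{IZ} ∈ ℝ, and set β = diag(a_{XX}, a_{YY}, 1), S = (a_{XI}, 0, a_{ZI}), P = (a_{IX}, 0, a_{IZ}). For θ ∈ ℝ and γ ∈ {−1, +1} let O(θ,γ) be the 3×3 matrix with rows (cos θ, 0, sin θ), (0, γ, 0), (−γ sin θ, 0, γ cos θ). Then for all θ_L, θ_R ∈ ℝ and γ_L, γ_R ∈ {−1,+1}, the triple (O(θ_L,γ_L)·β·O(θ_R,γ_R)ᵀ, O(θ_L,γ_L)·S, O(θ_R,γ_R)·P) satisfies the Z-matrix coefficient conditions if and only if the following three inequalities hold: (1) sin θ_L sin θ_R + a_{XX} cos θ_L cos θ_R ≤ −|a_{YY}|; (2) a_{IX} cos θ_R + a_{IZ} sin θ_R ≤ −|cos θ_L sin θ_R − a_{XX} cos θ_R sin θ_L|; (3) a_{XI} cos θ_L + a_{ZI} sin θ_L ≤ −|cos θ_R sin θ_L − a_{XX} cos θ_L sin θ_R|. -/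

import Mathlib

open Matrix Real

/-- The triple `(β, S, P)` parametrizing a two-qubit Hamiltonian satisfies the
symmetric-Z-matrix coefficient conditions. -/
def ZCond (β : Matrix (Fin 3) (Fin 3) ℝ) (S P : Fin 3 → ℝ) : Prop :=
  β 0 1 = 0 ∧ β 1 0 = 0 ∧ β 1 2 = 0 ∧ β 2 1 = 0 ∧ S 1 = 0 ∧ P 1 = 0 ∧
  β 0 0 ≤ -|β 1 1| ∧ P 0 ≤ -|β 2 0| ∧ S 0 ≤ -|β 0 2|

/-- The realness-preserving rotation: an `X`–`Z` plane rotation by angle `θ`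
combined with a possible reflection `γ = ±1`. -/
noncomputable def Orot (θ γ : ℝ) : Matrix (Fin 3) (Fin 3) ℝ :=
  !![Real.cos θ, 0, Real.sin θ;
     0, γ, 0;
     -γ * Real.sin θ, 0, γ * Real.cos θ]

private lemma ZCond_key {x y a b : ℝ} (hxy : x = y) (h : a = b ∨ a = -b) :
    x ≤ -|a| ↔ y ≤ -|b| := by
  rcases h with rfl | rfl <;> simp [hxy, abs_neg]

theorem ZCond_iff_three_inequalities
    (aXX aYY aXI aZI aIX aIZ : ℝ)
    (θL θR γL γR : ℝ) (hγL : γL = -1 ∨ γL = 1) (hγR : γR = -1 ∨ γR = 1) :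
    ZCond (Orot θL γL * Matrix.diagonal ![aXX, aYY, 1] * (Orot θR γR)ᵀ)
        (Orot θL γL *ᵥ ![aXI, 0, aZI]) (Orot θR γR *ᵥ ![aIX, 0, aIZ]) ↔
      (Real.sin θL * Real.sin θR + aXX * Real.cos θL * Real.cos θR ≤ -|aYY| ∧
       aIX * Real.cos θR + aIZ * Real.sin θR ≤
         -|Real.cos θL * Real.sin θR - aXX * Real.cos θR * Real.sin θL| ∧
       aXI * Real.cos θL + aZI * Real.sin θL ≤
         -|Real.cos θR * Real.sin θL - aXX * Real.cos θL * Real.sin θR|) := by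
  rcases hγL with rfl | rfl <;> rcases hγR with rfl | rfl <;>
    simp only [ZCond, Orot, Matrix.mul_apply, Matrix.mulVec, dotProduct,
      Fin.sum_univ_three, Matrix.transpose_apply, Matrix.diagonal_apply,
      Matrix.cons_val', Matrix.cons_val, Matrix.cons_val_zero, Matrix.cons_val_one, Matrix.head_cons,
      Matrix.empty_val', Matrix.cons_val_fin_one, Matrix.of_apply, Matrix.head_fin_const,
      Fin.isValue] <;>
    norm_num [show (2:Fin 3) ≠ 1 from by decide, show (1:Fin 3) ≠ 2 from by decide,
      show (2:Fin 3) ≠ 0 from by decide, show (0:Fin 3) ≠ 2 from by decide] <;>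
    (refine and_congr (ZCond_key (by ring_nf) (Or.inl rfl))
      (and_congr (ZCond_key (by ring_nf) ?_) (ZCond_key (by ring_nf) ?_)) <;>
      first | (apply Or.inl; ring_nf; done) | (apply Or.inr; ring_nf; done))
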